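/- arXiv:2205.14076 — 8 statements merged into one kernel-verified Lean document; each statement's English description precedes it below -/
import Mathlib

section
/- In the uniform trust model with n processes, where every quorum has size q and every set of at most f processes may be faulty (with f < q ≤ n), the inconsistency number — the maximum, over all faulty sets F of size at most f and all assignments S of one quorum to each correct process, of the independence number of the graph on correct processes where two processes are adjacent iff their assigned quorums share a correct process — equals ⌊(n−f)/(q−f)⌋. -/
lemma exists_blocks {α : Type*} [DecidableEq α] (m : ℕ) :
    ∀ (k : ℕ) (A : Finset α), k * m ≤ A.card →
    ∃ B : ℕ → Finset α, (∀ i < k, B i ⊆ A ∧ (B i).card = m) ∧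
      ∀ i < k, ∀ j < k, i ≠ j → Disjoint (B i) (B j) := by
  intro k
  induction k with
  | zero => intro A _; exact ⟨fun _ => ∅, by omega, by omega⟩
  | succ k ih =>
    intro A hA
    have hm : m ≤ A.card := by rw [Nat.succ_mul] at hA; omega
    obtain ⟨B0, hB0A, hB0c⟩ := Finset.exists_subset_card_eq hm
    have hcard : k * m ≤ (A \ B0).card := by
      rw [Finset.card_sdiff_of_subset hB0A, hB0c]
      have h2 := hA
      rw [Nat.succ_mul] at h2
      omega
    obtain ⟨B', hB', hdisj⟩ := ih (A \ B0) hcard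
    refine ⟨fun i => if i < k then B' i else B0, ?_, ?_⟩
    · intro i hi
      by_cases h : i < k
      · simp only [h, if_true]
        exact ⟨(hB' i h).1.trans (Finset.sdiff_subset), (hB' i h).2⟩
      · simp only [h, if_false]; exact ⟨hB0A, hB0c⟩
    · intro i hi j hj hij
      by_cases h1 : i < k <;> by_cases h2 : j < k <;>
        simp only [h1, h2, if_true, if_false]
      · exact hdisj i h1 j h2 hij
      · exact Finset.sdiff_disjoint.mono_left (hB' i h1).1
      · exact (Finset.sdiff_disjoint.mono_left (hB' j h2).1).symm
      · omega

/-- In the uniform trust model with `n` processes, quorum size `q` and at most `f`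
faulty processes (`f < q ≤ n`), the inconsistency number — the maximum over faulty
sets `F` of size at most `f` and quorum assignments `S` of the independence number
of the trust graph `G_{F,S}` — equals `⌊(n−f)/(q−f)⌋`. -/
theorem uniform_inconsistency_number
    {α : Type*} [DecidableEq α] (Pi : Finset α) (n q f : ℕ)
    (hn : Pi.card = n) (hfq : f < q) (hqn : q ≤ n) :
    (∀ (F : Finset α) (S : α → Finset α) (C : Finset α),
        F ⊆ Pi → F.card ≤ f →
        (∀ p ∈ Pi \ F, S p ⊆ Pi ∧ p ∈ S p ∧ (S p).card = q) →
        C ⊆ Pi \ F →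
        (∀ p ∈ C, ∀ r ∈ C, p ≠ r → S p ∩ S r ⊆ F) →
        C.card ≤ (n - f) / (q - f))
    ∧
    (∃ (F : Finset α) (S : α → Finset α) (C : Finset α),
        F ⊆ Pi ∧ F.card ≤ f ∧
        (∀ p ∈ Pi \ F, S p ⊆ Pi ∧ p ∈ S p ∧ (S p).card = q) ∧
        C ⊆ Pi \ F ∧
        (∀ p ∈ C, ∀ r ∈ C, p ≠ r → S p ∩ S r ⊆ F) ∧
        C.card = (n - f) / (q - f)) := by
  classical
  constructor
  · -- upper bound
    intro F S C hFPi hFf hS hC hind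
    have hdisj : ∀ p ∈ C, ∀ r ∈ C, p ≠ r → Disjoint (S p \ F) (S r \ F) := by
      intro p hp r hr hpr
      rw [Finset.disjoint_left]
      intro x hx hx'
      exact (Finset.mem_sdiff.1 hx).2 (hind p hp r hr hpr (Finset.mem_inter.2
        ⟨(Finset.mem_sdiff.1 hx).1, (Finset.mem_sdiff.1 hx').1⟩))
    have hcard : ∀ p ∈ C, q - F.card ≤ (S p \ F).card := by
      intro p hp
      have hp' := hS p (hC hp)
      have h1 : (S p ∩ F).card ≤ F.card := Finset.card_le_card Finset.inter_subset_right
      have := Finset.card_sdiff_add_card_inter (S p) F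
      omega
    have hsub : C.biUnion (fun p => S p \ F) ⊆ Pi \ F := by
      intro x hx
      obtain ⟨p, hp, hx⟩ := Finset.mem_biUnion.1 hx
      exact Finset.mem_sdiff.2 ⟨(hS p (hC hp)).1 (Finset.mem_sdiff.1 hx).1,
        (Finset.mem_sdiff.1 hx).2⟩
    have hbu : (C.biUnion (fun p => S p \ F)).card = ∑ p ∈ C, (S p \ F).card :=
      Finset.card_biUnion hdisj
    have hsum : C.card * (q - F.card) ≤ ∑ p ∈ C, (S p \ F).card := by
      simpa [smul_eq_mul] using Finset.card_nsmul_le_sum C _ _ hcard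
    have hPiF : (Pi \ F).card = n - F.card := by
      rw [Finset.card_sdiff_of_subset hFPi, hn]
    have hmain : C.card * (q - F.card) ≤ n - F.card := by
      calc C.card * (q - F.card) ≤ ∑ p ∈ C, (S p \ F).card := hsum
        _ = (C.biUnion (fun p => S p \ F)).card := hbu.symm
        _ ≤ (Pi \ F).card := Finset.card_le_card hsub
        _ = n - F.card := hPiF
    rw [Nat.le_div_iff_mul_le (by omega : 0 < q - f)]
    rcases Nat.eq_zero_or_pos C.card with h0 | h1
    · simp [h0]
    · have e1 : C.card * (q - F.card) = C.card * (q - f) + C.card * (f - F.card) := by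
        rw [← Nat.mul_add]
        congr 1
        omega
      have e2 : f - F.card ≤ C.card * (f - F.card) := Nat.le_mul_of_pos_left _ h1
      omega
  · -- construction
    have hq1 : 1 ≤ q := by omega
    have hfn : f ≤ Pi.card := by omega
    obtain ⟨F, hFPi, hFc⟩ := Finset.exists_subset_card_eq hfn
    set k := (n - f) / (q - f) with hk
    have hPiF : (Pi \ F).card = n - f := by rw [Finset.card_sdiff_of_subset hFPi, hn, hFc]
    have hkm : k * (q - f) ≤ (Pi \ F).card := by rw [hPiF]; exact Nat.div_mul_le_self _ _
    obtain ⟨B, hB, hBdisj⟩ := exists_blocks (q - f) k (Pi \ F) hkm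
    have hBne : ∀ i < k, (B i).Nonempty := by
      intro i hi
      rw [← Finset.card_pos, (hB i hi).2]
      omega
    -- pick a representative of each block
    have hPine : Pi.Nonempty := by rw [← Finset.card_pos, hn]; omega
    set p : ℕ → α := fun i => if h : (B i).Nonempty then h.choose else hPine.choose with hp
    have hpB : ∀ i < k, p i ∈ B i := by
      intro i hi
      simp only [hp, dif_pos (hBne i hi)]
      exact (hBne i hi).choose_spec
    -- fallback quorums
    have hT : ∀ x : α, ∃ T : Finset α, x ∈ Pi → (x ∈ T ∧ T ⊆ Pi ∧ T.card = q) := by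
      intro x
      by_cases hx : x ∈ Pi
      · obtain ⟨T, hT1, hT2, hT3⟩ := Finset.exists_subsuperset_card_eq
          (Finset.singleton_subset_iff.2 hx) (by simpa using hq1) (by omega : q ≤ Pi.card)
        exact ⟨T, fun _ => ⟨hT1 (Finset.mem_singleton_self x), hT2, hT3⟩⟩
      · exact ⟨∅, fun h => absurd h hx⟩
    choose T hTspec using hT
    set S : α → Finset α := fun x =>
      if h : ∃ i, i < k ∧ p i = x then B h.choose ∪ F else T x with hSdef
    have hSB : ∀ x, ∀ h : ∃ i, i < k ∧ p i = x, S x = B h.choose ∪ F := by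
      intro x h; simp only [hSdef, dif_pos h]
    have hBF : ∀ i < k, Disjoint (B i) F := by
      intro i hi
      exact Finset.sdiff_disjoint.mono_left (hB i hi).1
    have hSq : ∀ x ∈ Pi \ F, S x ⊆ Pi ∧ x ∈ S x ∧ (S x).card = q := by
      intro x hx
      have hxPi : x ∈ Pi := (Finset.mem_sdiff.1 hx).1
      by_cases h : ∃ i, i < k ∧ p i = x
      · rw [hSB x h]
        obtain ⟨hik, hpx⟩ := h.choose_spec
        refine ⟨?_, ?_, ?_⟩
        · exact Finset.union_subset (((hB _ hik).1).trans Finset.sdiff_subset) hFPi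
        · have hm : p h.choose ∈ B h.choose ∪ F := Finset.mem_union_left _ (hpB _ hik)
          rwa [hpx] at hm
        · rw [Finset.card_union_of_disjoint (hBF _ hik), (hB _ hik).2, hFc]
          omega
      · simp only [hSdef, dif_neg h]
        obtain ⟨a, b, c⟩ := hTspec x hxPi
        exact ⟨b, a, c⟩
    -- the independent set
    set C : Finset α := (Finset.range k).image p with hC
    have hpinj : ∀ i < k, ∀ j < k, p i = p j → i = j := by
      intro i hi j hj hij
      by_contra hne
      exact Finset.disjoint_left.1 (hBdisj i hi j hj hne) (hpB i hi) (hij ▸ hpB j hj)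
    have hCcard : C.card = k := by
      rw [hC, Finset.card_image_of_injOn, Finset.card_range]
      intro i hi j hj
      exact hpinj i (Finset.mem_range.1 hi) j (Finset.mem_range.1 hj)
    have hCsub : C ⊆ Pi \ F := by
      intro x hx
      obtain ⟨i, hi, rfl⟩ := Finset.mem_image.1 hx
      exact (hB i (Finset.mem_range.1 hi)).1 (hpB i (Finset.mem_range.1 hi))
    refine ⟨F, S, C, hFPi, hFc.le, hSq, hCsub, ?_, hCcard⟩
    intro x hx y hy hxy
    obtain ⟨i, hi, rfl⟩ := Finset.mem_image.1 hx
    obtain ⟨j, hj, rfl⟩ := Finset.mem_image.1 hy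
    rw [Finset.mem_range] at hi hj
    have hex : ∃ a, a < k ∧ p a = p i := ⟨i, hi, rfl⟩
    have hey : ∃ a, a < k ∧ p a = p j := ⟨j, hj, rfl⟩
    rw [hSB _ hex, hSB _ hey]
    have hix := hex.choose_spec
    have hjy := hey.choose_spec
    have hne : hex.choose ≠ hey.choose := by
      intro h
      exact hxy (hix.2 ▸ hjy.2 ▸ h ▸ rfl)
    intro z hz
    rcases Finset.mem_inter.1 hz with ⟨hz1, hz2⟩
    rcases Finset.mem_union.1 hz1 with h1 | h1
    · rcases Finset.mem_union.1 hz2 with h2 | h2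
      · exact absurd h2 (Finset.disjoint_left.1 (hBdisj _ hix.1 _ hjy.1 hne) h1)
      · exact h2
    · exact h1
end

section
/- Given a finite set Π, a faulty set F of size f, and m pairwise-disjoint-modulo-F quorums of size q ≥ f assigned to m correct processes, there exists a modified quorum assignment S' in which each of these m processes gets a quorum of size q containing all of F, such that the m processes still form an independent set of G_{F,S'}. Consequently if |S(p_i) \ F| ≥ q − f for all i, then m ≤ ⌊(n−f)/(q−f)⌋ when q > f. -/
/-- Given `m` quorums of size `q` assigned to `m` distinct correct processes, pairwise
intersecting only inside a faulty set `F` of size `f` (with `f < q ≤ n`), there is a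
modified assignment in which each of the `m` processes gets a quorum of size `q`
containing all of `F`, still forming an independent set; consequently
`m ≤ ⌊(n−f)/(q−f)⌋`. -/
theorem modified_quorums_and_bound
    {α : Type*} [DecidableEq α] (Pi F : Finset α) (n q f m : ℕ)
    (p : Fin m → α) (Q : Fin m → Finset α)
    (hn : Pi.card = n) (hF : F ⊆ Pi) (hf : F.card = f)
    (hfq : f < q) (hqn : q ≤ n)
    (hpinj : Function.Injective p)
    (hpcor : ∀ i, p i ∈ Pi \ F)
    (hQsub : ∀ i, Q i ⊆ Pi) (hQcard : ∀ i, (Q i).card = q)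
    (hpQ : ∀ i, p i ∈ Q i)
    (hdisj : ∀ i j, i ≠ j → Q i ∩ Q j ⊆ F) :
    (∃ Q' : Fin m → Finset α,
        (∀ i, Q' i ⊆ Pi ∧ (Q' i).card = q ∧ F ⊆ Q' i ∧ p i ∈ Q' i) ∧
        (∀ i j, i ≠ j → Q' i ∩ Q' j ⊆ F))
    ∧ m ≤ (n - f) / (q - f) := by
  have hcardQF : ∀ i, q - f ≤ (Q i \ F).card := by
    intro i
    have := Finset.le_card_sdiff F (Q i)
    rw [hQcard i, hf] at this
    exact this
  -- choose T i ⊆ Q i \ F of card q - f containing p i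
  have hTex : ∀ i : Fin m, ∃ T : Finset α, {p i} ⊆ T ∧ T ⊆ Q i \ F ∧ T.card = q - f := by
    intro i
    have hmem : ({p i} : Finset α) ⊆ Q i \ F := by
      intro x hx
      rw [Finset.mem_singleton] at hx
      subst hx
      exact Finset.mem_sdiff.mpr ⟨hpQ i, fun h => (Finset.mem_sdiff.mp (hpcor i)).2 h⟩
    have hsz : (q - f - 1) + ({p i} : Finset α).card ≤ (Q i \ F).card := by
      rw [Finset.card_singleton]; have := hcardQF i; omega
    obtain ⟨T, hT1, hT2, hT3⟩ := Finset.exists_subsuperset_card_eq (n := (q - f - 1) + ({p i} : Finset α).card) hmem (Nat.le_add_left _ _) hsz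
    exact ⟨T, hT1, hT2, by rw [hT3, Finset.card_singleton]; omega⟩
  choose T hTp hTsub hTcard using hTex
  have hTdisj : ∀ i j : Fin m, i ≠ j → Disjoint (T i) (T j) := by
    intro i j hij
    rw [Finset.disjoint_left]
    intro x hxi hxj
    have hi := Finset.mem_sdiff.mp (hTsub i hxi)
    have hj := Finset.mem_sdiff.mp (hTsub j hxj)
    exact hi.2 (hdisj i j hij (Finset.mem_inter.mpr ⟨hi.1, hj.1⟩))
  have hTPiF : ∀ i, T i ⊆ Pi \ F := by
    intro i x hx
    have := Finset.mem_sdiff.mp (hTsub i hx)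
    exact Finset.mem_sdiff.mpr ⟨hQsub i this.1, this.2⟩
  refine ⟨⟨fun i => T i ∪ F, fun i => ?_, fun i j hij => ?_⟩, ?_⟩
  · refine ⟨Finset.union_subset (fun x hx => (Finset.mem_sdiff.mp (hTPiF i hx)).1) hF, ?_,
      Finset.subset_union_right, Finset.mem_union_left _ (hTp i (Finset.mem_singleton_self _))⟩
    have hdTF : Disjoint (T i) F := by
      rw [Finset.disjoint_left]
      intro x hx
      exact (Finset.mem_sdiff.mp (hTsub i hx)).2
    rw [Finset.card_union_of_disjoint hdTF, hTcard i, hf]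
    omega
  · intro x hx
    rw [Finset.mem_inter, Finset.mem_union, Finset.mem_union] at hx
    obtain ⟨hx1 | hx1, hx2 | hx2⟩ := hx
    · exact absurd hx2 (Finset.disjoint_left.mp (hTdisj i j hij) hx1)
    · exact hx2
    · exact hx1
    · exact hx1
  · -- bound
    have hbiu : (Finset.univ.biUnion T).card = m * (q - f) := by
      rw [Finset.card_biUnion (fun i _ j _ hij => hTdisj i j hij)]
      simp [hTcard, Finset.sum_const, Finset.card_univ]
    have hsub : Finset.univ.biUnion T ⊆ Pi \ F := by
      intro x hx
      obtain ⟨i, _, hxi⟩ := Finset.mem_biUnion.mp hx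
      exact hTPiF i hxi
    have hcard : m * (q - f) ≤ n - f := by
      have := Finset.card_le_card hsub
      rw [hbiu, Finset.card_sdiff_of_subset hF, hn, hf] at this
      exact this
    rw [Nat.le_div_iff_mul_le (by omega : 0 < q - f)]
    exact hcard
end

section
/- For every well-formed transaction history T and every process w, the balance of w in T is nonnegative: the total amount transferred to w by transactions in T is at least the total amount spent by transactions in T issued by w. -/
/-- An abstract asset-transfer signature: transactions of type `Tx` have an issuer,
an output map, and a finite set of input transactions. -/
structure ATSig (α Tx : Type*) where
  issuer : Tx → α
  out : Tx → α → ℕ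
  inputs : Tx → Finset Tx

variable {α Tx : Type*} [DecidableEq α] [DecidableEq Tx]

/-- Two distinct transactions conflict iff they have the same issuer and share an input. -/
def Conflict (A : ATSig α Tx) (t t' : Tx) : Prop :=
  t ≠ t' ∧ A.issuer t = A.issuer t' ∧ (A.inputs t ∩ A.inputs t').Nonempty

/-- `outValue` of a transaction: the total amount it spends. -/
def outValue (A : ATSig α Tx) (Pi : Finset α) (t : Tx) : ℕ := ∑ p ∈ Pi, A.out t p

/-- `inValue` of a transaction: the total amount its inputs transfer to its issuer. -/
def inValue (A : ATSig α Tx) (t : Tx) : ℕ := ∑ t' ∈ A.inputs t, A.out t' (A.issuer t)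

/-- A well-formed transaction history. -/
def WellFormed (A : ATSig α Tx) (Pi : Finset α) (txinit : Tx) (T : Finset Tx) : Prop :=
  txinit ∈ T ∧ A.inputs txinit = ∅ ∧
  (∀ t ∈ T, ∀ t' ∈ A.inputs t, 0 < A.out t' (A.issuer t)) ∧
  (∀ t ∈ T, t ≠ txinit → 0 < outValue A Pi t ∧ outValue A Pi t = inValue A t) ∧
  (∀ t ∈ T, ∀ t' ∈ A.inputs t, t' ∈ T) ∧
  (∀ t ∈ T, ∀ t' ∈ T, ¬ Conflict A t t') ∧
  (∀ t ∈ T, ¬ Relation.TransGen (fun a b => a ∈ A.inputs b) t t)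

/-- For every well-formed history `T` and every process `w`, the balance of `w` in `T`
is nonnegative: the total transferred to `w` is at least the total spent by `w`. -/
theorem balance_nonneg (A : ATSig α Tx) (Pi : Finset α) (txinit : Tx) (T : Finset Tx)
    (hwf : WellFormed A Pi txinit T) (hinit : A.issuer txinit ∉ Pi)
    (w : α) (hw : w ∈ Pi) :
    (∑ t ∈ T.filter (fun t => A.issuer t = w), outValue A Pi t) ≤ ∑ t ∈ T, A.out t w := by
  obtain ⟨hinitT, hinit0, hpos, hval, hcomp, hnc, hcyc⟩ := hwf
  set S := T.filter (fun t => A.issuer t = w) with hS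
  have hmem : ∀ t ∈ S, t ∈ T ∧ A.issuer t = w := fun t ht => Finset.mem_filter.mp ht
  have hne : ∀ t ∈ S, t ≠ txinit := by
    intro t ht h
    apply hinit
    rw [← h, (hmem t ht).2]
    exact hw
  have h1 : ∀ t ∈ S, outValue A Pi t = ∑ t' ∈ A.inputs t, A.out t' w := by
    intro t ht
    rw [(hval t (hmem t ht).1 (hne t ht)).2, inValue, (hmem t ht).2]
  rw [Finset.sum_congr rfl h1]
  have hdisj : (S : Set Tx).PairwiseDisjoint A.inputs := by
    intro a ha b hb hab
    simp only [Finset.mem_coe] at ha hb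
    have h := hnc a (hmem a ha).1 b (hmem b hb).1
    rw [Conflict] at h
    push_neg at h
    have := h hab ((hmem a ha).2.trans (hmem b hb).2.symm)
    exact Finset.disjoint_iff_inter_eq_empty.mpr this
  rw [← Finset.sum_biUnion hdisj]
  apply Finset.sum_le_sum_of_subset
  intro x hx
  obtain ⟨t, ht, hx⟩ := Finset.mem_biUnion.mp hx
  exact hcomp t (hmem t ht).1 x hx
end

section
/- If an asset-transfer system satisfies k-Spending, then the induced broadcast scheme (where the source broadcasts m by issuing a transaction with input {tx_init} carrying m, and a correct process delivers m' upon accepting any such transaction carrying m') satisfies k-Consistency: the set of values delivered by correct processes has size at most k. -/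
variable {α Tx : Type*} [DecidableEq α] [DecidableEq Tx]

/-- If an asset-transfer system satisfies `k`-Spending, then the induced broadcast
scheme — the source `p` broadcasts `m` by issuing a transaction with input `{tx_init}`
carrying `m`, and a correct process delivers the message of any such transaction it
accepts — satisfies `k`-Consistency: correct processes deliver at most `k` distinct
values. -/
theorem k_spending_implies_k_consistency
    {M : Type*} [DecidableEq M]
    (A : ATSig α Tx) (txinit : Tx) (p : α) (msg : Tx → M)
    (Correct : Finset α) (hist : α → Finset Tx) (k : ℕ)
    -- `tx_init` is incoming to the source `p`.
    (hin : 0 < A.out txinit p)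
    -- `k`-Spending: for every process `r` and transaction `tx` incoming to `r`, at
    -- most `k` distinct transactions issued by `r` using `tx` as input appear in the
    -- histories of correct processes.
    (hspend : ∀ (r : α) (tx : Tx), 0 < A.out tx r →
        ((Correct.biUnion hist).filter
          (fun t => A.issuer t = r ∧ tx ∈ A.inputs t)).card ≤ k)
    -- Distinct messages yield distinct broadcast transactions.
    (hmsg : ∀ t t' : Tx, A.issuer t = p → A.issuer t' = p →
        A.inputs t = {txinit} → A.inputs t' = {txinit} → msg t = msg t' → t = t') :
    (((Correct.biUnion hist).filter
        (fun t => A.issuer t = p ∧ A.inputs t = {txinit})).image msg).card ≤ k := by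
  calc (((Correct.biUnion hist).filter
        (fun t => A.issuer t = p ∧ A.inputs t = {txinit})).image msg).card
      ≤ ((Correct.biUnion hist).filter
        (fun t => A.issuer t = p ∧ A.inputs t = {txinit})).card := Finset.card_image_le
    _ ≤ ((Correct.biUnion hist).filter
        (fun t => A.issuer t = p ∧ txinit ∈ A.inputs t)).card := by
        apply Finset.card_le_card
        intro t ht
        simp only [Finset.mem_filter] at ht ⊢
        exact ⟨ht.1, ht.2.1, by simp [ht.2.2]⟩
    _ ≤ k := hspend p txinit hin
end

section
/- For any collection Γ of well-formed histories, the cover number of Γ (the minimum number of clusters needed to cover Γ) is at least the spending number γ(Γ). -/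
variable {α Tx : Type*} [DecidableEq α] [DecidableEq Tx]

/-- The projection of a history `T` to the transactions issued by `r`. -/
def proj (A : ATSig α Tx) (T : Finset Tx) (r : α) : Finset Tx :=
  T.filter (fun t => A.issuer t = r)

/-- A cluster: a set of histories whose projections to each issuer are pairwise
`⊆`-comparable. -/
def IsCluster (A : ATSig α Tx) (C : Finset (Finset Tx)) : Prop :=
  ∀ r : α, ∀ T₁ ∈ C, ∀ T₂ ∈ C, proj A T₁ r ⊆ proj A T₂ r ∨ proj A T₂ r ⊆ proj A T₁ r

/-- For any collection `Γ` of well-formed histories, any cover of `Γ` by nonempty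
clusters has at least `γ(Γ)` members: the cover number of `Γ` is at least the spending
number of `Γ`. -/
theorem cover_number_ge_spending_number (A : ATSig α Tx) (Pi : Finset α) (txinit : Tx)
    (Γ : Finset (Finset Tx)) (hwf : ∀ T ∈ Γ, WellFormed A Pi txinit T)
    (𝒞 : Finset (Finset (Finset Tx)))
    (hclusters : ∀ C ∈ 𝒞, IsCluster A C ∧ C.Nonempty ∧ C ⊆ Γ)
    (hcover : 𝒞.biUnion id = Γ) :
    ∀ (r : α) (tx : Tx), 0 < A.out tx r →
      ((Γ.biUnion id).filter (fun t => A.issuer t = r ∧ tx ∈ A.inputs t)).card ≤ 𝒞.card := by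
  intro r tx _
  classical
  apply Finset.card_le_card_of_injOn
    (f := fun t => if h : ∃ C ∈ 𝒞, ∃ T ∈ C, t ∈ T then h.choose else ∅)
  · intro t ht
    simp only [Finset.mem_coe, Finset.mem_filter, Finset.mem_biUnion, id] at ht
    obtain ⟨⟨T, hT, htT⟩, _, _⟩ := ht
    have hTb : T ∈ 𝒞.biUnion id := hcover ▸ hT
    simp only [Finset.mem_biUnion, id] at hTb
    obtain ⟨C, hC, hTC⟩ := hTb
    have h : ∃ C ∈ 𝒞, ∃ T ∈ C, t ∈ T := ⟨C, hC, T, hTC, htT⟩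
    simp only [dif_pos h]
    exact h.choose_spec.1
  · intro t₁ ht₁ t₂ ht₂ heq
    simp only [Finset.coe_filter, Set.mem_setOf_eq, Finset.mem_biUnion, id] at ht₁ ht₂
    obtain ⟨⟨T₁, hT₁, ht₁T⟩, hi₁, hin₁⟩ := ht₁
    obtain ⟨⟨T₂, hT₂, ht₂T⟩, hi₂, hin₂⟩ := ht₂
    have mk : ∀ t : Tx, ∀ T ∈ Γ, t ∈ T → ∃ C ∈ 𝒞, ∃ T ∈ C, t ∈ T := by
      intro t T hT htT
      have hTb : T ∈ 𝒞.biUnion id := hcover ▸ hT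
      simp only [Finset.mem_biUnion, id] at hTb
      obtain ⟨C, hC, hTC⟩ := hTb
      exact ⟨C, hC, T, hTC, htT⟩
    have h1 := mk t₁ T₁ hT₁ ht₁T
    have h2 := mk t₂ T₂ hT₂ ht₂T
    simp only [dif_pos h1, dif_pos h2] at heq
    obtain ⟨hC1, S₁, hS₁C, ht₁S⟩ := h1.choose_spec
    obtain ⟨hC2, S₂, hS₂C, ht₂S⟩ := h2.choose_spec
    rw [heq] at hS₁C
    -- both S₁ S₂ in cluster h2.choose
    obtain ⟨hcl, _, hsub⟩ := hclusters _ hC2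
    by_contra hne
    have hconf : Conflict A t₁ t₂ := ⟨hne, hi₁.trans hi₂.symm, ⟨tx, Finset.mem_inter.2 ⟨hin₁, hin₂⟩⟩⟩
    have hp1 : t₁ ∈ proj A S₁ r := Finset.mem_filter.2 ⟨ht₁S, hi₁⟩
    have hp2 : t₂ ∈ proj A S₂ r := Finset.mem_filter.2 ⟨ht₂S, hi₂⟩
    rcases hcl r S₁ hS₁C S₂ hS₂C with hss | hss
    · have := (hwf S₂ (hsub hS₂C)).2.2.2.2.2.1 t₁ (Finset.mem_filter.1 (hss hp1)).1 t₂ ht₂S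
      exact this hconf
    · have := (hwf S₁ (hsub hS₁C)).2.2.2.2.2.1 t₁ ht₁S t₂ (Finset.mem_filter.1 (hss hp2)).1
      exact this hconf
end

section
/- Two well-formed histories that each contain a distinct member of a pair of conflicting transactions cannot belong to the same cluster. -/
variable {α Tx : Type*} [DecidableEq α] [DecidableEq Tx]

/-- Two well-formed histories that each contain a distinct member of a pair of
conflicting transactions cannot belong to the same cluster. -/
theorem conflicting_histories_not_in_common_cluster
    (A : ATSig α Tx) (Pi : Finset α) (txinit : Tx)
    (T₁ T₂ : Finset Tx)
    (hwf₁ : WellFormed A Pi txinit T₁) (hwf₂ : WellFormed A Pi txinit T₂)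
    (t t' : Tx) (ht : t ∈ T₁) (ht' : t' ∈ T₂) (hconf : Conflict A t t') :
    ∀ C : Finset (Finset Tx), IsCluster A C → T₁ ∈ C → T₂ ∈ C → False := by
  intro C hC h1 h2
  obtain ⟨hne, hiss, hinter⟩ := hconf
  have hmem : t ∈ proj A T₁ (A.issuer t) := Finset.mem_filter.mpr ⟨ht, rfl⟩
  have hmem' : t' ∈ proj A T₂ (A.issuer t) := Finset.mem_filter.mpr ⟨ht', hiss.symm⟩
  rcases hC (A.issuer t) T₁ h1 T₂ h2 with h | h
  · exact hwf₂.2.2.2.2.2.1 t (Finset.mem_filter.mp (h hmem)).1 t' ht' ⟨hne, hiss, hinter⟩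
  · exact hwf₁.2.2.2.2.2.1 t ht t' (Finset.mem_filter.mp (h hmem')).1 ⟨hne, hiss, hinter⟩
end

section
/- The union of all histories in a cluster satisfies the No-Conflict property: no two distinct transactions in the union have the same issuer and a shared input. -/
variable {α Tx : Type*} [DecidableEq α] [DecidableEq Tx]

/-- The union of all histories in a cluster satisfies No-Conflict: no two distinct
transactions in the union have the same issuer and a shared input. -/
theorem cluster_union_no_conflict (A : ATSig α Tx) (Pi : Finset α) (txinit : Tx)
    (C : Finset (Finset Tx)) (hwf : ∀ T ∈ C, WellFormed A Pi txinit T)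
    (hcl : IsCluster A C) :
    ∀ t ∈ C.biUnion id, ∀ t' ∈ C.biUnion id, ¬ Conflict A t t' := by
  intro t ht t' ht' hc
  simp only [Finset.mem_biUnion, id] at ht ht'
  obtain ⟨T₁, hT₁, htT₁⟩ := ht
  obtain ⟨T₂, hT₂, htT₂⟩ := ht'
  obtain ⟨hne, hiss, hin⟩ := hc
  set r := A.issuer t with hr
  have h1 : t ∈ proj A T₁ r := Finset.mem_filter.mpr ⟨htT₁, rfl⟩
  have h2 : t' ∈ proj A T₂ r := Finset.mem_filter.mpr ⟨htT₂, hiss.symm⟩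
  rcases hcl r T₁ hT₁ T₂ hT₂ with h | h
  · have := (hwf T₂ hT₂).2.2.2.2.2.1
    exact this t (Finset.mem_filter.mp (h h1)).1 t' htT₂ ⟨hne, hiss, hin⟩
  · have := (hwf T₁ hT₁).2.2.2.2.2.1
    exact this t htT₁ t' (Finset.mem_filter.mp (h h2)).1 ⟨hne, hiss, hin⟩
end

section
/- In a well-formed history, every transaction other than tx_init spends exactly as much as it receives, and therefore the sum over all processes of the balance function equals outValue(tx_init): total stake is conserved. -/
variable {α Tx : Type*} [DecidableEq α] [DecidableEq Tx]

/-- In a well-formed history, every transaction other than `tx_init` spends exactly as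
much as it receives, and therefore the sum over all processes of the balance function
equals `outValue(tx_init)`: total stake is conserved. -/
theorem total_stake_conserved (A : ATSig α Tx) (Pi : Finset α) (txinit : Tx)
    (T : Finset Tx) (hwf : WellFormed A Pi txinit T)
    (hinit : A.issuer txinit ∉ Pi)
    (hissuers : ∀ t ∈ T, t ≠ txinit → A.issuer t ∈ Pi) :
    (∀ t ∈ T, t ≠ txinit → outValue A Pi t = inValue A t)
    ∧ (∑ w ∈ Pi,
        ((∑ t ∈ T, (A.out t w : ℤ)) -
          ∑ t ∈ T.filter (fun t => A.issuer t = w), (outValue A Pi t : ℤ)))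
      = (outValue A Pi txinit : ℤ) := by
  obtain ⟨hinitT, -, -, hvalid, -, -, -⟩ := hwf
  refine ⟨fun t ht hne => (hvalid t ht hne).2, ?_⟩
  rw [Finset.sum_sub_distrib]
  have h1 : ∑ w ∈ Pi, ∑ t ∈ T, (A.out t w : ℤ) = ∑ t ∈ T, (outValue A Pi t : ℤ) := by
    rw [Finset.sum_comm]
    simp [outValue]
  have hfilter : ∀ w ∈ Pi, T.filter (fun t => A.issuer t = w)
      = (T.filter (fun t => A.issuer t ∈ Pi)).filter (fun t => A.issuer t = w) := by
    intro w hw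
    ext t
    simp only [Finset.mem_filter]
    constructor
    · rintro ⟨ht, he⟩; exact ⟨⟨ht, he ▸ hw⟩, he⟩
    · rintro ⟨⟨ht, -⟩, he⟩; exact ⟨ht, he⟩
  have h2 : ∑ w ∈ Pi, ∑ t ∈ T.filter (fun t => A.issuer t = w), (outValue A Pi t : ℤ)
      = ∑ t ∈ T.filter (fun t => A.issuer t ∈ Pi), (outValue A Pi t : ℤ) := by
    rw [Finset.sum_congr rfl (fun w hw => by rw [hfilter w hw])]
    exact Finset.sum_fiberwise_of_maps_to (fun t ht => (Finset.mem_filter.mp ht).2) _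
  have hcompl : T.filter (fun t => ¬ A.issuer t ∈ Pi) = {txinit} := by
    ext t
    simp only [Finset.mem_filter, Finset.mem_singleton]
    constructor
    · rintro ⟨ht, hn⟩
      by_contra hne
      exact hn (hissuers t ht hne)
    · rintro rfl; exact ⟨hinitT, hinit⟩
  have h3 : ∑ t ∈ T.filter (fun t => A.issuer t ∈ Pi), (outValue A Pi t : ℤ)
      = ∑ t ∈ T, (outValue A Pi t : ℤ) - outValue A Pi txinit := by
    have := Finset.sum_filter_add_sum_filter_not T (fun t => A.issuer t ∈ Pi)
      (fun t => (outValue A Pi t : ℤ))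
    rw [hcompl] at this
    simp at this
    omega
  rw [h1, h2, h3]
  ring
end
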